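/- Let A be an abelian group, R an integral domain, and W : A → R an elliptic net. Then W is an odd function: for every v ∈ A, W(−v) = −W(v). -/

import Mathlib

/-- An *elliptic net* is a map `W : A → R` from an abelian group `A` to an integral
domain `R` such that `W 0 = 0` and, for all `p q r s : A`,
`W (p+q+s) * W (p-q) * W (r+s) * W r + W (q+r+s) * W (q-r) * W (p+s) * W p
  + W (r+p+s) * W (r-p) * W (q+s) * W q = 0`. -/
def IsEllipticNet' {A R : Type*} [AddCommGroup A] [CommRing R] (W : A → R) : Prop :=
  W 0 = 0 ∧ ∀ p q r s : A,
    W (p + q + s) * W (p - q) * W (r + s) * W r +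
      W (q + r + s) * W (q - r) * W (p + s) * W p +
      W (r + p + s) * W (r - p) * W (q + s) * W q = 0

/-!
Taking `p = a`, `q = b`, `r = s = 0` in the elliptic net relation kills the first term
(since `W 0 = 0`) and leaves `W b ^ 2 * W a * (W a + W (-a)) = 0`. Unless `W` vanishes
identically, some `W b ≠ 0`, so `W a * (W a + W (-a)) = 0` for every `a`; applying this to
both `a` and `-a` forces `W (-a) = -W a`.
-/

theorem Function.odd_of_forall_mul_add_neg_eq_zero {α R : Type*} [InvolutiveNeg α] [Ring R]
    [NoZeroDivisors R] {f : α → R} (h : ∀ a, f a * (f a + f (-a)) = 0) : f.Odd := by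
  intro a
  rcases mul_eq_zero.mp (h a) with hfa | hsum
  · have hneg := h (-a)
    rw [neg_neg, hfa, add_zero, mul_self_eq_zero] at hneg
    rw [hneg, hfa, neg_zero]
  · exact eq_neg_of_add_eq_zero_right hsum

namespace IsEllipticNet'

variable {A R : Type*} [AddCommGroup A] [CommRing R] {W : A → R}

theorem sq_mul_mul_add_neg_eq_zero (hW : IsEllipticNet' W) (a b : A) :
    W b ^ 2 * (W a * (W a + W (-a))) = 0 := by
  have h := hW.2 a b 0 0
  simp only [add_zero, zero_add, sub_zero, zero_sub, hW.1, mul_zero] at h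
  linear_combination h

theorem mul_add_neg_eq_zero [NoZeroDivisors R] (hW : IsEllipticNet' W) {b : A} (hb : W b ≠ 0)
    (a : A) : W a * (W a + W (-a)) = 0 :=
  (mul_eq_zero.mp (hW.sq_mul_mul_add_neg_eq_zero a b)).resolve_left (pow_ne_zero 2 hb)

end IsEllipticNet'

/-- An elliptic net with values in an integral domain is an odd function. -/
theorem ellipticNet_odd {A R : Type*} [AddCommGroup A] [CommRing R] [IsDomain R]
    (W : A → R) (hW : IsEllipticNet' W) : ∀ v : A, W (-v) = -W v := by
  by_cases hzero : ∀ b, W b = 0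
  · intro v
    rw [hzero v, hzero (-v), neg_zero]
  · push Not at hzero
    obtain ⟨b, hb⟩ := hzero
    exact Function.odd_of_forall_mul_add_neg_eq_zero (hW.mul_add_neg_eq_zero hb)
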